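/- Let n ≥ 1, let 0 < p < 1, let 0 < ε < 1, and set p₀ = pε + (1−ε)/2^n. Then the mutual information I = h(p) − p₀ · h((p/p₀)(ε + (1−ε)/2^n)) − (1−p₀) · h((p(1−ε)/(1−p₀))(1 − 1/2^n)) is strictly positive. (This is the information about whether the Deutsch–Jozsa function is constant or balanced gained from one quantum query with an unentangled pseudo-pure state: it is positive for every ε > 0, whereas a single classical query gives zero information.) -/

import Mathlib

/-!
Observing the outcome splits the prior `p` into two posteriors `q₁ = p a / p₀` and
`q₂ = p (1 - a) / (1 - p₀)` whose `p₀`-weighted average is again `p`. They differ as soon as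
the two hypotheses give different outcome probabilities `a ≠ b`, so strict concavity of the
binary entropy makes the expected posterior entropy strictly smaller than `h(p)`. For the
Deutsch–Jozsa query with a pseudo-pure state, `a - b = ε > 0`.
-/

/-- The binary entropy function `h(q) = -q log₂ q - (1-q) log₂ (1-q)`
(with `0 log₂ 0 = 0`, which holds by the junk-value convention `Real.logb 2 0 = 0`). -/
noncomputable def binEntropy (q : ℝ) : ℝ :=
  -q * Real.logb 2 q - (1 - q) * Real.logb 2 (1 - q)

open Set

lemma binEntropy_eq_div_log_two (q : ℝ) : binEntropy q = Real.binEntropy q / Real.log 2 := by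
  simp only [binEntropy, Real.binEntropy, Real.logb, Real.log_inv]
  ring

lemma binEntropy_mixture_lt {w q₁ q₂ : ℝ} (hw0 : 0 < w) (hw1 : w < 1)
    (hq₁ : q₁ ∈ Icc (0 : ℝ) 1) (hq₂ : q₂ ∈ Icc (0 : ℝ) 1) (hne : q₁ ≠ q₂) :
    w * binEntropy q₁ + (1 - w) * binEntropy q₂ < binEntropy (w * q₁ + (1 - w) * q₂) := by
  have hlog : 0 < Real.log 2 := Real.log_pos one_lt_two
  have key := Real.strictConcave_binEntropy.2 hq₁ hq₂ hne hw0 (sub_pos.2 hw1) (by ring)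
  simp only [smul_eq_mul] at key
  simp only [binEntropy_eq_div_log_two, ← mul_div_assoc, ← add_div]
  exact div_lt_div_of_pos_right key hlog

/-- The information about the hypothesis (prior `p`) gained from a binary outcome that occurs
with probability `a` under the hypothesis and `b` under its negation. -/
theorem binEntropy_sub_posterior_pos {p a b p₀ : ℝ} (hp0 : 0 < p) (hp1 : p < 1)
    (ha : a ∈ Icc (0 : ℝ) 1) (hb : b ∈ Icc (0 : ℝ) 1) (hab : a ≠ b)
    (hp₀ : p₀ = p * a + (1 - p) * b) :
    0 < binEntropy p - p₀ * binEntropy (p / p₀ * a)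
      - (1 - p₀) * binEntropy (p * (1 - a) / (1 - p₀)) := by
  obtain ⟨ha0, ha1⟩ := ha
  obtain ⟨hb0, hb1⟩ := hb
  have hq : 0 < 1 - p := sub_pos.2 hp1
  have hp₀0 : 0 < p₀ := by
    rcases hab.lt_or_gt with h | h <;> subst hp₀ <;> nlinarith
  have hp₀1 : p₀ < 1 := by
    rcases hab.lt_or_gt with h | h <;> subst hp₀ <;> nlinarith
  have h1p₀ : 0 < 1 - p₀ := sub_pos.2 hp₀1
  have hq₁ : p / p₀ * a ∈ Icc (0 : ℝ) 1 := by
    refine ⟨by positivity, ?_⟩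
    rw [div_mul_eq_mul_div, div_le_one hp₀0]
    nlinarith
  have hq₂ : p * (1 - a) / (1 - p₀) ∈ Icc (0 : ℝ) 1 := by
    refine ⟨div_nonneg (mul_nonneg hp0.le (sub_nonneg.2 ha1)) h1p₀.le, ?_⟩
    rw [div_le_one h1p₀]
    nlinarith
  have hne : p / p₀ * a ≠ p * (1 - a) / (1 - p₀) := by
    rw [div_mul_eq_mul_div, Ne, div_eq_div_iff hp₀0.ne' h1p₀.ne']
    intro h
    have : p * (1 - p) * (a - b) = 0 := by subst hp₀; linear_combination h
    simp_all [sub_eq_zero, hp0.ne', hq.ne']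
  have hmix : p₀ * (p / p₀ * a) + (1 - p₀) * (p * (1 - a) / (1 - p₀)) = p := by
    field_simp
    ring
  have := binEntropy_mixture_lt hp₀0 hp₀1 hq₁ hq₂ hne
  rw [hmix] at this
  linarith

theorem dj_pps_mutual_information_pos_general (n : ℕ) (p ε : ℝ)
    (hp0 : 0 < p) (hp1 : p < 1) (hε0 : 0 < ε) (hε1 : ε < 1) (p₀ : ℝ)
    (hp₀ : p₀ = p * ε + (1 - ε) / 2 ^ n) :
    0 < binEntropy p
        - p₀ * binEntropy (p / p₀ * (ε + (1 - ε) / 2 ^ n))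
        - (1 - p₀) * binEntropy (p * (1 - ε) / (1 - p₀) * (1 - 1 / 2 ^ n)) := by
  have hT : (1 : ℝ) ≤ 2 ^ n := one_le_pow₀ one_le_two
  have hb : (1 - ε) / 2 ^ n ∈ Icc (0 : ℝ) 1 :=
    ⟨by have := hε1; positivity, (div_le_one₀ (by positivity)).2 (by linarith)⟩
  have ha : ε + (1 - ε) / 2 ^ n ∈ Icc (0 : ℝ) 1 := by
    refine ⟨by linarith [hb.1], ?_⟩
    have : (1 - ε) / 2 ^ n ≤ 1 - ε := div_le_self (by linarith) hT
    linarith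
  have key := binEntropy_sub_posterior_pos (p₀ := p₀) hp0 hp1 ha hb (by linarith)
    (by rw [hp₀]; ring)
  convert key using 4
  ring

/-- The information about whether the Deutsch–Jozsa function is constant or balanced
gained from one quantum query with an unentangled pseudo-pure state of purity `ε > 0`
is strictly positive, for every a priori probability `0 < p < 1` of a constant function.
Here `p₀ = pε + (1-ε)/2^n` is the probability of measuring outcome `z = 0`. -/
theorem dj_pps_mutual_information_pos (n : ℕ) (hn : 1 ≤ n) (p ε : ℝ)
    (hp0 : 0 < p) (hp1 : p < 1) (hε0 : 0 < ε) (hε1 : ε < 1) (p₀ : ℝ)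
    (hp₀ : p₀ = p * ε + (1 - ε) / 2 ^ n) :
    0 < binEntropy p
        - p₀ * binEntropy (p / p₀ * (ε + (1 - ε) / 2 ^ n))
        - (1 - p₀) * binEntropy (p * (1 - ε) / (1 - p₀) * (1 - 1 / 2 ^ n)) :=
  dj_pps_mutual_information_pos_general n p ε hp0 hp1 hε0 hε1 p₀ hp₀
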